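/- arXiv:math/0501010 — 4 statements merged into one kernel-verified Lean document; each statement's English description precedes it below -/
import Mathlib

section
/- Let m and p be integers with m, p ≥ 2 and set n = m + p. The number of permutations σ of {1,…,n} satisfying −p ≤ i − σ(i) ≤ m for all i ∈ {1,…,n} equals (−1)^p · Σ_{i=0}^{p} (−1)^i · i! · (i+1)^m · S(p,i), where the equality is an equality of integers. (This common value is the poly-Bernoulli number B_p^{(−m)}.) -/
/-- Stirling numbers of the second kind: `stirling n k` is the number of
partitions of an `n`-element set into `k` nonempty blocks. It satisfies
`stirling 0 0 = 1`, `stirling n 0 = 0` for `n ≥ 1`, and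
`stirling (n+1) k = k * stirling n k + stirling n (k-1)`. -/
def stirling : ℕ → ℕ → ℕ
  | 0, 0 => 1
  | 0, _ + 1 => 0
  | _ + 1, 0 => 0
  | n + 1, k + 1 => (k + 1) * stirling n (k + 1) + stirling n k

/-!
Let `B` be the board of cells outside the band. By inclusion–exclusion over the
cells of `B` met by the graph of a permutation, the number of permutations avoiding `B` is
`∑ₖ (-1)^k rₖ(B) (n - k)!`, where `rₖ(B)` counts placements of `k` non-attacking rooks on `B`.
Here `B` consists of two staircases, above and below the band, with disjoint rows and columns,
so placements on `B` are pairs of independent placements. The staircase with `t` columns has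
`rₖ = S(t, t - k)`: adding its last column reproduces the Stirling recursion. The resulting
double sum collapses by `∑ⱼ (-1)^j S(m, j) (j + k)! = (-1)^m k! (k + 1)^m`.
-/

open Finset Nat Equiv

theorem stirling_eq_stirlingSecond : ∀ n k, stirling n k = stirlingSecond n k
  | 0, 0 | 0, _ + 1 | _ + 1, 0 => rfl
  | n + 1, k + 1 => by
    rw [stirling, stirlingSecond_succ_succ, stirling_eq_stirlingSecond n,
      stirling_eq_stirlingSecond n]

namespace Nat

theorem sum_neg_one_pow_mul_stirlingSecond_mul_factorial (m k : ℕ) :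
    ∑ j ∈ range (m + 1), (-1 : ℤ) ^ j * stirlingSecond m j * (j + k)! =
      (-1) ^ m * k ! * (k + 1) ^ m := by
  induction m with
  | zero => simp
  | succ m ih =>
    set g : ℕ → ℤ := fun j => (-1) ^ j * j * stirlingSecond m j * (j + k)! with hg
    have hshift : ∑ j ∈ range (m + 1), g (j + 1) = ∑ j ∈ range (m + 1), g j := by
      have h0 : g 0 = 0 := by simp [g]
      have hlast : g (m + 1) = 0 := by simp [g, stirlingSecond_eq_zero_of_lt]
      linarith [sum_range_succ' g (m + 1), sum_range_succ g (m + 1)]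
    have hterm : ∀ j, (-1 : ℤ) ^ (j + 1) * stirlingSecond (m + 1) (j + 1) * (j + 1 + k)! =
        g (j + 1) - g j - (k + 1) * ((-1) ^ j * stirlingSecond m j * (j + k)!) := by
      intro j
      simp only [hg, stirlingSecond_succ_succ, show j + 1 + k = j + k + 1 by ring, factorial_succ]
      push_cast
      ring
    rw [sum_range_succ', stirlingSecond_succ_zero]
    simp only [hterm, sum_sub_distrib, ← mul_sum, hshift, ih]
    push_cast
    ring

theorem stirlingSecond_zero_right {n : ℕ} (hn : n ≠ 0) : stirlingSecond n 0 = 0 := by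
  obtain ⟨k, rfl⟩ := exists_eq_succ_of_ne_zero hn
  rfl

end Nat

theorem neg_one_pow_sub {m j : ℕ} (h : j ≤ m) : (-1 : ℤ) ^ (m - j) = (-1) ^ m * (-1) ^ j := by
  rw [← Nat.sub_add_cancel h, Nat.add_sub_cancel, pow_add, mul_assoc, ← pow_add, ← two_mul,
    pow_mul, neg_one_sq, one_pow, mul_one]

section Rook

variable {α β : Type*} {S T : Finset (α × β)}

def IsRookPlacement (T : Finset (α × β)) : Prop :=
  ∀ x ∈ T, ∀ y ∈ T, x.1 = y.1 ∨ x.2 = y.2 → x = y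

theorem IsRookPlacement.mono (hT : IsRookPlacement T) (hST : S ⊆ T) : IsRookPlacement S :=
  fun x hx y hy => hT x (hST hx) y (hST hy)

theorem IsRookPlacement.injOn_fst (hT : IsRookPlacement T) : Set.InjOn Prod.fst (T : Set (α × β)) :=
  fun x hx y hy h => hT x hx y hy (Or.inl h)

theorem IsRookPlacement.injOn_snd (hT : IsRookPlacement T) : Set.InjOn Prod.snd (T : Set (α × β)) :=
  fun x hx y hy h => hT x hx y hy (Or.inr h)

theorem isRookPlacement_map_prodMap {α' β' : Type*} (f : α ↪ α') (g : β ↪ β') :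
    IsRookPlacement (T.map (f.prodMap g)) ↔ IsRookPlacement T := by
  simp only [IsRookPlacement, forall_mem_map, Function.Embedding.coe_prodMap, Prod.map_fst,
    Prod.map_snd, EmbeddingLike.apply_eq_iff_eq, (f.injective.prodMap g.injective).eq_iff]

theorem isRookPlacement_of_forall_apply_eq {σ : Perm α} {T : Finset (α × α)}
    (h : ∀ x ∈ T, σ x.1 = x.2) : IsRookPlacement T := by
  rintro ⟨a, b⟩ hx ⟨c, d⟩ hy hxy
  have h₁ := h _ hx
  have h₂ := h _ hy
  simp only at h₁ h₂ hxy
  rcases hxy with rfl | rfl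
  · rw [← h₁, ← h₂]
  · rw [σ.injective (h₁.trans h₂.symm)]

variable [DecidableEq α] [DecidableEq β]

theorem IsRookPlacement.insert {x : α × β} (hT : IsRookPlacement T)
    (hx : ∀ y ∈ T, y.1 ≠ x.1 ∧ y.2 ≠ x.2) : IsRookPlacement (insert x T) := by
  intro y hy z hz hyz
  rcases mem_insert.1 hy with hy | hy <;> rcases mem_insert.1 hz with hz | hz
  · rw [hy, hz]
  · grind
  · grind
  · exact hT y hy z hz hyz

instance : DecidablePred (IsRookPlacement (α := α) (β := β)) := fun _ => by
  unfold IsRookPlacement; infer_instance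

def rookPlacements (B : Finset (α × β)) : Finset (Finset (α × β)) :=
  B.powerset.filter IsRookPlacement

def rookNumber (B : Finset (α × β)) (k : ℕ) : ℕ := #{T ∈ rookPlacements B | #T = k}

theorem mem_rookPlacements {B : Finset (α × β)} :
    T ∈ rookPlacements B ↔ T ⊆ B ∧ IsRookPlacement T := by
  simp [rookPlacements]

theorem rookNumber_zero (B : Finset (α × β)) : rookNumber B 0 = 1 := by
  rw [rookNumber, card_eq_one]
  refine ⟨∅, eq_singleton_iff_unique_mem.2 ⟨?_, fun T hT => ?_⟩⟩
  · simp [mem_rookPlacements, IsRookPlacement]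
  · simpa using (mem_filter.1 hT).2

theorem rookNumber_map {α' β' : Type*} [DecidableEq α'] [DecidableEq β'] (f : α ↪ α') (g : β ↪ β')
    (B : Finset (α × β)) (k : ℕ) : rookNumber (B.map (f.prodMap g)) k = rookNumber B k := by
  refine (card_bij (fun T _ => T.map (f.prodMap g)) (fun T hT => ?_)
    (fun _ _ _ _ h => map_injective _ h) (fun T hT => ?_)).symm
  · simp only [mem_filter, mem_rookPlacements, card_map, isRookPlacement_map_prodMap] at hT ⊢
    exact ⟨⟨map_subset_map.2 hT.1.1, hT.1.2⟩, hT.2⟩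
  · simp only [mem_filter, mem_rookPlacements] at hT
    obtain ⟨U, hUB, rfl⟩ := subset_map_iff.1 hT.1.1
    refine ⟨U, ?_, rfl⟩
    simp only [mem_filter, mem_rookPlacements, card_map, isRookPlacement_map_prodMap] at hT ⊢
    exact ⟨⟨hUB, hT.1.2⟩, hT.2⟩

theorem sum_rookPlacements_eq_sum_rookNumber {M : Type*} [AddCommMonoid M] {B : Finset (α × β)}
    {N : ℕ} (hN : ∀ k, N < k → rookNumber B k = 0) (f : ℕ → M) :
    ∑ T ∈ rookPlacements B, f #T = ∑ k ∈ range (N + 1), rookNumber B k • f k := by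
  rw [← sum_fiberwise_of_maps_to (g := card) (t := range (N + 1))]
  · refine sum_congr rfl fun k _ => ?_
    rw [rookNumber, ← sum_const]
    exact sum_congr rfl fun T hT => by rw [(mem_filter.1 hT).2]
  · intro T hT
    by_contra hN'
    have := card_eq_zero.1 (hN #T (by simpa using hN'))
    exact (eq_empty_iff_forall_notMem.1 this) T (mem_filter.2 ⟨hT, rfl⟩)

theorem sum_rookPlacements_eq_sum_stirlingSecond {M : Type*} [AddCommMonoid M]
    {B : Finset (α × β)} {t : ℕ} (ht : t ≠ 0) (hB : ∀ k, rookNumber B k = stirlingSecond t (t - k))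
    (f : ℕ → M) :
    ∑ T ∈ rookPlacements B, f #T = ∑ k ∈ range (t + 1), stirlingSecond t (t - k) • f k := by
  simp only [← hB]
  exact sum_rookPlacements_eq_sum_rookNumber (fun k hk => by
    rw [hB, Nat.sub_eq_zero_of_le hk.le, stirlingSecond_zero_right ht]) f

theorem sum_rookPlacements_union {M : Type*} [AddCommMonoid M] {B₁ B₂ : Finset (α × β)}
    (hB : ∀ x ∈ B₁, ∀ y ∈ B₂, x.1 ≠ y.1 ∧ x.2 ≠ y.2) (f : ℕ → M) :
    ∑ T ∈ rookPlacements (B₁ ∪ B₂), f #T =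
      ∑ T₁ ∈ rookPlacements B₁, ∑ T₂ ∈ rookPlacements B₂, f (#T₁ + #T₂) := by
  have hdisj : Disjoint B₁ B₂ := disjoint_left.2 fun x h₁ h₂ => (hB x h₁ x h₂).1 rfl
  rw [← sum_product']
  refine sum_nbij' (fun T => (T ∩ B₁, T ∩ B₂)) (fun P => P.1 ∪ P.2) ?_ ?_ ?_ ?_ ?_
  · intro T hT
    simp only [mem_rookPlacements, mem_product] at hT ⊢
    exact ⟨⟨inter_subset_right, hT.2.mono inter_subset_left⟩,
      ⟨inter_subset_right, hT.2.mono inter_subset_left⟩⟩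
  · rintro ⟨T₁, T₂⟩ h
    simp only [mem_rookPlacements, mem_product] at h ⊢
    obtain ⟨⟨h₁, hT₁⟩, ⟨h₂, hT₂⟩⟩ := h
    refine ⟨union_subset_union h₁ h₂, fun x hx y hy hxy => ?_⟩
    rcases mem_union.1 hx with hx | hx <;> rcases mem_union.1 hy with hy | hy
    · exact hT₁ x hx y hy hxy
    · exact (hxy.elim (hB x (h₁ hx) y (h₂ hy)).1 (hB x (h₁ hx) y (h₂ hy)).2).elim
    · exact (hxy.elim ((hB y (h₁ hy) x (h₂ hx)).1 ·.symm) ((hB y (h₁ hy) x (h₂ hx)).2 ·.symm)).elim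
    · exact hT₂ x hx y hy hxy
  · intro T hT
    rw [← inter_union_distrib_left, inter_eq_left.2 (mem_rookPlacements.1 hT).1]
  · rintro ⟨T₁, T₂⟩ h
    simp only [mem_rookPlacements, mem_product] at h
    simp only [union_inter_distrib_right, inter_eq_left.2 h.1.1, inter_eq_left.2 h.2.1,
      disjoint_iff_inter_eq_empty.1 (hdisj.mono_left h.1.1),
      disjoint_iff_inter_eq_empty.1 (hdisj.symm.mono_left h.2.1), union_empty, empty_union]
  · intro T hT
    rw [← card_union_of_disjoint (hdisj.mono inter_subset_right inter_subset_right),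
      ← inter_union_distrib_left, inter_eq_left.2 (mem_rookPlacements.1 hT).1]

section Column

variable {B : Finset (α × β)} {X : Finset α} {c : β}

theorem insert_mem_rookPlacements_union_column (hcol : ∀ x ∈ B, x.2 ≠ c)
    {T : Finset (α × β)} (hT : T ∈ rookPlacements B) {x : α} (hx : x ∈ X \ T.image Prod.fst) :
    insert (x, c) T ∈ rookPlacements (B ∪ X ×ˢ {c}) := by
  obtain ⟨hTB, hT⟩ := mem_rookPlacements.1 hT
  simp only [mem_sdiff, mem_image, not_exists, not_and] at hx
  exact mem_rookPlacements.2 ⟨insert_subset (by simp [hx.1]) (hTB.trans subset_union_left),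
    hT.insert fun y hy => ⟨hx.2 y hy, hcol y (hTB hy)⟩⟩

theorem erase_mem_rookPlacements_of_mem_column (hcol : ∀ x ∈ B, x.2 ≠ c)
    {T : Finset (α × β)} (hT : T ∈ rookPlacements (B ∪ X ×ˢ {c})) {y : α × β} (hy : y ∈ T)
    (hyc : y.2 = c) : T.erase y ∈ rookPlacements B ∧ y.1 ∈ X \ (T.erase y).image Prod.fst := by
  obtain ⟨hTB, hT⟩ := mem_rookPlacements.1 hT
  have hattack : ∀ z ∈ T.erase y, z.1 ≠ y.1 ∧ z.2 ≠ c := fun z hz =>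
    have hne := (mem_erase.1 hz).1
    ⟨fun h => hne (hT z (mem_of_mem_erase hz) y hy (Or.inl h)),
      fun h => hne (hT z (mem_of_mem_erase hz) y hy (Or.inr (h.trans hyc.symm)))⟩
  refine ⟨mem_rookPlacements.2 ⟨fun z hz => ?_, hT.mono (erase_subset _ _)⟩, mem_sdiff.2 ⟨?_, ?_⟩⟩
  · rcases mem_union.1 (hTB (mem_of_mem_erase hz)) with h | h
    · exact h
    · exact absurd (mem_singleton.1 (mem_product.1 h).2) (hattack z hz).2
  · rcases mem_union.1 (hTB hy) with h | h
    · exact absurd hyc (hcol y h)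
    · exact (mem_product.1 h).1
  · simp only [mem_image, not_exists, not_and]
    exact fun z hz => (hattack z hz).1

/-- Adding a rook in column `c` to a placement of `k` rooks on `B` leaves `#X - k` free rows. -/
theorem card_rookPlacements_union_column_meeting (hrow : ∀ x ∈ B, x.1 ∈ X)
    (hcol : ∀ x ∈ B, x.2 ≠ c) (k : ℕ) :
    #{T ∈ rookPlacements (B ∪ X ×ˢ {c}) | #T = k + 1 ∧ ¬∀ x ∈ T, x.2 ≠ c} =
      (#X - k) * rookNumber B k := by
  set P := {T ∈ rookPlacements B | #T = k}
  have hPcol : ∀ T ∈ P, ∀ x ∈ T, x.2 ≠ c := fun T hT x hx =>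
    hcol x ((mem_rookPlacements.1 (mem_filter.1 hT).1).1 hx)
  calc _ = #(P.sigma fun T => X \ T.image Prod.fst) := by
        refine (card_bij (fun p _ => insert (p.2, c) p.1) ?_ ?_ ?_).symm
        · rintro ⟨T, x⟩ h
          obtain ⟨hT, hx⟩ := mem_sigma.1 h
          have hxc : (x, c) ∉ T := fun h => hPcol T hT _ h rfl
          refine mem_filter.2 ⟨insert_mem_rookPlacements_union_column hcol (mem_filter.1 hT).1 hx,
            by rw [card_insert_of_notMem hxc, (mem_filter.1 hT).2], ?_⟩
          exact fun h => h _ (mem_insert_self _ _) rfl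
        · rintro ⟨T, x⟩ hT ⟨T', x'⟩ hT' h
          have hfilter : ∀ U ∈ P, ∀ y, (insert (y, c) U).filter (·.2 ≠ c) = U := fun U hU y => by
            rw [filter_insert, if_neg (by simp), filter_true_of_mem (hPcol U hU)]
          obtain rfl : T = T' := by
            simpa [hfilter T (mem_sigma.1 hT).1, hfilter T' (mem_sigma.1 hT').1] using
              congrArg (filter (·.2 ≠ c)) h
          rcases mem_insert.1 (h ▸ mem_insert_self (x, c) T) with hx | hx
          · cases hx; rfl
          · exact absurd rfl (hPcol T (mem_sigma.1 hT).1 _ hx)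
        · intro T hT
          simp only [mem_filter, not_forall, not_not] at hT
          obtain ⟨hT, hk, y, hy, hyc⟩ := hT
          obtain ⟨hTy, hyX⟩ := erase_mem_rookPlacements_of_mem_column hcol hT hy hyc
          refine ⟨⟨T.erase y, y.1⟩, mem_sigma.2 ⟨mem_filter.2 ⟨hTy, ?_⟩, hyX⟩, ?_⟩
          · rw [card_erase_of_mem hy, hk, add_tsub_cancel_right]
          · rw [show (y.1, c) = y from Prod.ext rfl hyc.symm, insert_erase hy]
    _ = ∑ T ∈ P, (#X - k) := by
        rw [Finset.card_sigma]
        refine sum_congr rfl fun T hT => ?_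
        obtain ⟨hT, hk⟩ := mem_filter.1 hT
        obtain ⟨hTB, hT⟩ := mem_rookPlacements.1 hT
        rw [card_sdiff_of_subset fun r hr => ?_, Finset.card_image_of_injOn hT.injOn_fst, hk]
        obtain ⟨x, hx, rfl⟩ := mem_image.1 hr
        exact hrow x (hTB hx)
    _ = _ := by rw [sum_const, smul_eq_mul, mul_comm, rookNumber]

theorem rookNumber_union_column_succ (hrow : ∀ x ∈ B, x.1 ∈ X) (hcol : ∀ x ∈ B, x.2 ≠ c)
    (k : ℕ) :
    rookNumber (B ∪ X ×ˢ {c}) (k + 1) = rookNumber B (k + 1) + (#X - k) * rookNumber B k := by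
  rw [rookNumber, ← card_filter_add_card_filter_not (fun T => ∀ x ∈ T, x.2 ≠ c), filter_filter,
    filter_filter, card_rookPlacements_union_column_meeting hrow hcol, rookNumber]
  congr 2
  ext T
  simp only [mem_filter, mem_rookPlacements, subset_iff, mem_union, mem_product, mem_singleton]
  constructor
  · rintro ⟨⟨hTB, hT⟩, hk, hc⟩
    exact ⟨⟨fun x hx => (hTB hx).resolve_right fun h => hc x hx h.2, hT⟩, hk⟩
  · rintro ⟨⟨hTB, hT⟩, hk⟩
    exact ⟨⟨fun x hx => Or.inl (hTB hx), hT⟩, hk, fun x hx => hcol x (hTB hx)⟩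

end Column

end Rook

section Perm

variable {α : Type*} [DecidableEq α] [Fintype α]

theorem card_perm_fixing (R : Finset α) :
    #{σ : Perm α | ∀ i ∈ R, σ i = i} = (Fintype.card α - #R)! := by
  rw [← Fintype.card_subtype, ← Fintype.card_coe R, ← Fintype.card_subtype_compl,
    ← Fintype.card_perm]
  refine (Fintype.card_congr ((Perm.subtypeEquivSubtypePerm _).trans
    (Equiv.subtypeEquivRight fun σ => ?_))).symm
  simp

/-- Left multiplication by `τ⁻¹`, for any permutation `τ` extending `T`, turns the permutations
extending `T` into those fixing its rows. -/
theorem card_perm_extending {T : Finset (α × α)} (hT : IsRookPlacement T) :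
    #{σ : Perm α | ∀ x ∈ T, σ x.1 = x.2} = (Fintype.card α - #T)! := by
  obtain ⟨τ, hτ⟩ := Perm.exists_extending_pair (fun x : T => x.1.1) (fun x : T => x.1.2)
    (fun x y h => Subtype.ext (hT.injOn_fst x.2 y.2 h))
    (fun x y h => Subtype.ext (hT.injOn_snd x.2 y.2 h))
  have hτ' : ∀ x ∈ T, τ x.1 = x.2 := fun x hx => hτ ⟨x, hx⟩
  rw [← Finset.card_image_of_injOn hT.injOn_fst, ← card_perm_fixing]
  refine card_equiv (Equiv.mulLeft τ⁻¹) fun σ => ?_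
  simp only [mem_filter, mem_univ, true_and, forall_mem_image, coe_mulLeft, Perm.mul_apply,
    Perm.inv_eq_iff_eq]
  exact forall₂_congr fun x hx => by rw [hτ' x hx]

theorem card_perm_avoiding (B : Finset (α × α))
    [DecidablePred fun σ : Perm α => ∀ i, (i, σ i) ∉ B] :
    (#{σ : Perm α | ∀ i, (i, σ i) ∉ B} : ℤ) =
      ∑ T ∈ rookPlacements B, (-1) ^ #T * ((Fintype.card α - #T)! : ℤ) := by
  -- `∑_{T ⊆ B ∩ graph σ} (-1)^#T` is `1` if `B ∩ graph σ = ∅` and `0` otherwise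
  have hσ : ∀ σ : Perm α, (if ∀ i, (i, σ i) ∉ B then 1 else 0 : ℤ) =
      ∑ T ∈ B.powerset, if ∀ x ∈ T, σ x.1 = x.2 then (-1) ^ #T else 0 := by
    intro σ
    have : B.powerset.filter (fun T => ∀ x ∈ T, σ x.1 = x.2) =
        (B.filter fun x => σ x.1 = x.2).powerset := by
      ext T
      simp only [mem_filter, mem_powerset, subset_iff]
      exact ⟨fun h x hx => ⟨h.1 hx, h.2 x hx⟩,
        fun h => ⟨fun x hx => (h hx).1, fun x hx => (h hx).2⟩⟩
    rw [← sum_filter, this, sum_powerset_neg_one_pow_card]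
    refine if_congr ?_ rfl rfl
    rw [filter_eq_empty_iff]
    exact ⟨fun h x hx hσx => h x.1 (by rwa [hσx]), fun h i hi => h hi rfl⟩
  calc (#{σ : Perm α | ∀ i, (i, σ i) ∉ B} : ℤ)
      = ∑ σ : Perm α, if ∀ i, (i, σ i) ∉ B then 1 else 0 := by
        rw [sum_boole]
    _ = ∑ T ∈ B.powerset, (-1) ^ #T * (#{σ : Perm α | ∀ x ∈ T, σ x.1 = x.2} : ℤ) := by
        simp only [hσ]
        rw [sum_comm]
        refine sum_congr rfl fun T _ => ?_
        rw [← sum_filter, sum_const, nsmul_eq_mul, mul_comm]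
    _ = _ := by
        rw [rookPlacements, sum_filter]
        refine sum_congr rfl fun T _ => ?_
        split_ifs with hT
        · rw [card_perm_extending hT]
        · rw [card_eq_zero.2 (filter_eq_empty_iff.2 fun σ _ =>
            mt isRookPlacement_of_forall_apply_eq hT)]
          simp

end Perm

def staircase (t : ℕ) : Finset (ℕ × ℕ) := (range t ×ˢ range t).filter fun c => c.1 < c.2

theorem staircase_succ (t : ℕ) : staircase (t + 1) = staircase t ∪ range t ×ˢ {t} := by
  ext ⟨x, y⟩
  simp only [staircase, mem_filter, mem_product, mem_range, mem_union, mem_singleton]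
  omega

theorem rookNumber_staircase (t k : ℕ) :
    rookNumber (staircase (t + 1)) k = stirlingSecond (t + 1) (t + 1 - k) := by
  induction t generalizing k with
  | zero =>
    cases k with
    | zero => rw [rookNumber_zero]; rfl
    | succ k =>
      rw [show staircase 1 = ∅ from rfl]
      simp [rookNumber, rookPlacements]
  | succ t ih =>
    cases k with
    | zero => rw [rookNumber_zero, Nat.sub_zero, stirlingSecond_self]
    | succ k =>
      have hrow : ∀ x ∈ staircase (t + 1), x.1 ∈ range (t + 1) := by
        simp only [staircase, mem_filter, mem_product]; tauto
      have hcol : ∀ x ∈ staircase (t + 1), x.2 ≠ t + 1 := by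
        simp only [staircase, mem_filter, mem_product, mem_range]; omega
      rw [staircase_succ, rookNumber_union_column_succ hrow hcol, ih, ih, card_range]
      rcases le_or_gt k t with hk | hk
      · rw [show t + 1 + 1 - (k + 1) = t - k + 1 by omega, show t + 1 - (k + 1) = t - k by omega,
          show t + 1 - k = t - k + 1 by omega, stirlingSecond_succ_succ (t + 1) (t - k)]
        ring
      · rw [show t + 1 + 1 - (k + 1) = 0 by omega, show t + 1 - (k + 1) = 0 by omega,
          show t + 1 - k = 0 by omega]
        simp

def upperCorner (n d : ℕ) : Finset (Fin n × Fin n) := univ.filter fun c => (c.1 : ℕ) + d < c.2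

def lowerCorner (n d : ℕ) : Finset (Fin n × Fin n) := univ.filter fun c => (c.2 : ℕ) + d < c.1

theorem notMem_upperCorner_union_lowerCorner_iff {n a b : ℕ} (i j : Fin n) :
    (i, j) ∉ upperCorner n a ∪ lowerCorner n b ↔
      -(a : ℤ) ≤ ((i : ℕ) : ℤ) - ((j : ℕ) : ℤ) ∧ ((i : ℕ) : ℤ) - ((j : ℕ) : ℤ) ≤ (b : ℤ) := by
  simp only [upperCorner, lowerCorner, mem_union, mem_filter, mem_univ, true_and]
  omega

theorem upperCorner_lowerCorner_apart {n a b : ℕ} (h : n ≤ a + b + 1) :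
    ∀ x ∈ upperCorner n a, ∀ y ∈ lowerCorner n b, x.1 ≠ y.1 ∧ x.2 ≠ y.2 := by
  simp only [upperCorner, lowerCorner, mem_filter, mem_univ, true_and]
  omega

theorem upperCorner_map_val (n d : ℕ) :
    (upperCorner n d).map (Fin.valEmbedding.prodMap Fin.valEmbedding) =
      (staircase (n - d)).map ((Function.Embedding.refl ℕ).prodMap (addRightEmbedding d)) := by
  ext ⟨a, b⟩
  simp only [upperCorner, staircase, mem_map, mem_filter, mem_univ, true_and, mem_product,
    mem_range, Function.Embedding.coe_prodMap, Prod.exists, Prod.map, Prod.mk.injEq,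
    Fin.valEmbedding_apply, Function.Embedding.refl_apply, addRightEmbedding_apply]
  constructor
  · rintro ⟨i, j, h, rfl, rfl⟩
    exact ⟨i, j - d, by omega⟩
  · rintro ⟨x, y, h, rfl, rfl⟩
    exact ⟨⟨x, by omega⟩, ⟨y + d, by omega⟩, by simp only; omega, rfl, rfl⟩

theorem lowerCorner_eq_map_upperCorner (n d : ℕ) :
    lowerCorner n d =
      (upperCorner n d).map (Fin.revPerm.toEmbedding.prodMap Fin.revPerm.toEmbedding) := by
  ext ⟨i, j⟩
  simp only [lowerCorner, upperCorner, mem_map, mem_filter, mem_univ, true_and,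
    Function.Embedding.coe_prodMap, Prod.exists, Prod.map, Prod.mk.injEq,
    Equiv.coe_toEmbedding, Fin.revPerm_apply]
  constructor
  · intro h
    exact ⟨i.rev, j.rev, by simp only [Fin.val_rev]; omega, Fin.rev_rev i, Fin.rev_rev j⟩
  · rintro ⟨a, b, h, rfl, rfl⟩
    simp only [Fin.val_rev]
    omega

theorem rookNumber_upperCorner {n d : ℕ} (hd : d < n) (k : ℕ) :
    rookNumber (upperCorner n d) k = stirlingSecond (n - d) (n - d - k) := by
  obtain ⟨t, ht⟩ : ∃ t, n - d = t + 1 := ⟨n - d - 1, by omega⟩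
  rw [← rookNumber_map Fin.valEmbedding Fin.valEmbedding, upperCorner_map_val, rookNumber_map, ht,
    rookNumber_staircase]

theorem rookNumber_lowerCorner {n d : ℕ} (hd : d < n) (k : ℕ) :
    rookNumber (lowerCorner n d) k = stirlingSecond (n - d) (n - d - k) := by
  rw [lowerCorner_eq_map_upperCorner, rookNumber_map, rookNumber_upperCorner hd]

theorem sum_sum_stirlingSecond_signed_factorial (m p : ℕ) :
    ∑ a ∈ range (m + 1), (stirlingSecond m (m - a) : ℤ) * ∑ b ∈ range (p + 1),
      (stirlingSecond p (p - b) : ℤ) * ((-1) ^ (a + b) * ((m + p - (a + b))! : ℤ)) =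
    (-1) ^ p *
      ∑ k ∈ range (p + 1), (-1) ^ k * (k ! : ℤ) * ((k : ℤ) + 1) ^ m * stirlingSecond p k := by
  have hsq : (-1 : ℤ) ^ m * (-1) ^ m = 1 := by rw [← mul_pow]; simp
  calc _ = ∑ j ∈ range (m + 1), ∑ k ∈ range (p + 1),
        (-1 : ℤ) ^ p * ((-1) ^ k * stirlingSecond p k) *
          ((-1) ^ m * ((-1) ^ j * stirlingSecond m j * (j + k)!)) := by
        -- reindex by `a = m - j`, `b = p - k`
        rw [← sum_range_reflect]
        refine sum_congr rfl fun j hj => ?_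
        rw [← sum_range_reflect, mul_sum]
        refine sum_congr rfl fun k hk => ?_
        have hj' := mem_range_succ_iff.1 hj
        have hk' := mem_range_succ_iff.1 hk
        rw [show m + 1 - 1 - j = m - j by omega, show p + 1 - 1 - k = p - k by omega,
          show m - (m - j) = j by omega, show p - (p - k) = k by omega,
          show m + p - (m - j + (p - k)) = j + k by omega, pow_add, neg_one_pow_sub hj',
          neg_one_pow_sub hk']
        ring
    _ = _ := by
        rw [sum_comm, mul_sum]
        refine sum_congr rfl fun k _ => ?_
        rw [← mul_sum, ← mul_sum, sum_neg_one_pow_mul_stirlingSecond_mul_factorial]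
        linear_combination
          (-1) ^ p * ((-1) ^ k * (stirlingSecond p k : ℤ)) * k ! * (k + 1) ^ m * hsq

theorem stmt1 (m p : ℕ) (hm : 2 ≤ m) (hp : 2 ≤ p) :
    ((Finset.univ.filter (fun σ : Equiv.Perm (Fin (m + p)) =>
        ∀ i : Fin (m + p), -(p : ℤ) ≤ ((i : ℕ) : ℤ) - ((σ i : ℕ) : ℤ) ∧
          ((i : ℕ) : ℤ) - ((σ i : ℕ) : ℤ) ≤ (m : ℤ))).card : ℤ)
      = (-1) ^ p * ∑ i ∈ Finset.range (p + 1),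
          (-1) ^ i * (Nat.factorial i : ℤ) * ((i : ℤ) + 1) ^ m * (stirling p i : ℤ) := by
  set U := upperCorner (m + p) p
  set L := lowerCorner (m + p) m
  have hU : ∀ a, rookNumber U a = stirlingSecond m (m - a) := fun a => by
    rw [rookNumber_upperCorner (by omega), Nat.add_sub_cancel]
  have hL : ∀ b, rookNumber L b = stirlingSecond p (p - b) := fun b => by
    rw [rookNumber_lowerCorner (by omega), Nat.add_sub_cancel_left]
  rw [filter_congr fun σ _ => forall_congr' fun i =>
      (notMem_upperCorner_union_lowerCorner_iff (a := p) (b := m) i (σ i)).symm,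
    card_perm_avoiding, Fintype.card_fin, sum_rookPlacements_union
      (upperCorner_lowerCorner_apart (by omega)) fun k => (-1 : ℤ) ^ k * ((m + p - k)! : ℤ)]
  calc ∑ T₁ ∈ rookPlacements U, ∑ T₂ ∈ rookPlacements L,
        (-1 : ℤ) ^ (#T₁ + #T₂) * ((m + p - (#T₁ + #T₂))! : ℤ)
      = ∑ a ∈ range (m + 1), stirlingSecond m (m - a) • ∑ b ∈ range (p + 1),
          stirlingSecond p (p - b) • ((-1 : ℤ) ^ (a + b) * ((m + p - (a + b))! : ℤ)) := by
        rw [← sum_rookPlacements_eq_sum_stirlingSecond (by omega) hU]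
        exact sum_congr rfl fun T₁ _ => sum_rookPlacements_eq_sum_stirlingSecond (by omega) hL
          fun b => (-1 : ℤ) ^ (#T₁ + b) * ((m + p - (#T₁ + b))! : ℤ)
    _ = _ := by
        simp only [nsmul_eq_mul, stirling_eq_stirlingSecond]
        exact sum_sum_stirlingSecond_signed_factorial m p
end

section
/- Let m ≥ 2 and t ∈ {0,…,m}. A permutation σ of {1,…,2m} belongs to 𝒮_t if and only if there exist indices m+1 ≤ j₁ < ⋯ < j_t ≤ 2m and 1 ≤ i₁ < ⋯ < i_t ≤ m such that: (1) j_k − m ≤ σ(j_k) ≤ m for all k ∈ {1,…,t}; (2) σ(l) ≥ m+1 for all l ∈ {m+1,…,2m} \ {j₁,…,j_t}; (3) m+1 ≤ σ(i_k) ≤ m + i_k for all k ∈ {1,…,t}; (4) σ(l) ≤ m for all l ∈ {1,…,m} \ {i₁,…,i_t}. -/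
theorem stmt4 (m : ℕ) (hm : 2 ≤ m) (t : ℕ) (ht : t ≤ m)
    (σ : Equiv.Perm (Fin (2 * m))) :
    ((∀ i : Fin (2 * m), -(m : ℤ) ≤ ((σ i : ℕ) : ℤ) - ((i : ℕ) : ℤ) ∧
        ((σ i : ℕ) : ℤ) - ((i : ℕ) : ℤ) ≤ (m : ℤ)) ∧
      (Finset.univ.filter
        (fun j : Fin (2 * m) => m ≤ (j : ℕ) ∧ (σ j : ℕ) < m)).card = t)
    ↔ ∃ (J I : Fin t → Fin (2 * m)), StrictMono J ∧ StrictMono I ∧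
        (∀ k : Fin t, m ≤ (J k : ℕ)) ∧ (∀ k : Fin t, (I k : ℕ) < m) ∧
        -- (1)  j_k − m ≤ σ(j_k) ≤ m
        (∀ k : Fin t, (J k : ℕ) - m ≤ (σ (J k) : ℕ) ∧ (σ (J k) : ℕ) < m) ∧
        -- (2)  σ(l) ≥ m+1 for l ∈ {m+1,…,2m} \ {j₁,…,j_t}
        (∀ l : Fin (2 * m), m ≤ (l : ℕ) → (∀ k : Fin t, l ≠ J k) → m ≤ (σ l : ℕ)) ∧
        -- (3)  m+1 ≤ σ(i_k) ≤ m + i_k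
        (∀ k : Fin t, m ≤ (σ (I k) : ℕ) ∧ (σ (I k) : ℕ) ≤ m + (I k : ℕ)) ∧
        -- (4)  σ(l) ≤ m for l ∈ {1,…,m} \ {i₁,…,i_t}
        (∀ l : Fin (2 * m), (l : ℕ) < m → (∀ k : Fin t, l ≠ I k) → (σ l : ℕ) < m) := by
  constructor
  · rintro ⟨hbd, hcard⟩
    set S := Finset.univ.filter
        (fun j : Fin (2 * m) => m ≤ (j : ℕ) ∧ (σ j : ℕ) < m) with hSdef
    set T := Finset.univ.filter
        (fun i : Fin (2 * m) => (i : ℕ) < m ∧ m ≤ (σ i : ℕ)) with hTdef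
    -- counting: T.card = t
    have key : (Finset.univ.filter (fun x : Fin (2 * m) => (σ x : ℕ) < m)).card
        = (Finset.univ.filter (fun y : Fin (2 * m) => (y : ℕ) < m)).card := by
      apply Finset.card_bij' (fun x _ => σ x) (fun y _ => σ.symm y)
      · intro x hx
        simp only [Finset.mem_filter, Finset.mem_univ, true_and] at hx ⊢
        exact hx
      · intro y hy
        simp only [Finset.mem_filter, Finset.mem_univ, true_and,
          Equiv.apply_symm_apply] at hy ⊢
        exact hy
      · intro x _; simp
      · intro y _; simp
    have hy : (Finset.univ.filter (fun y : Fin (2 * m) => (y : ℕ) < m)).card = m := by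
      have himg : Finset.univ.filter (fun y : Fin (2 * m) => (y : ℕ) < m)
          = Finset.univ.image (Fin.castLE (by omega : m ≤ 2 * m)) := by
        ext y
        simp only [Finset.mem_filter, Finset.mem_univ, true_and, Finset.mem_image]
        constructor
        · intro hy
          exact ⟨⟨(y : ℕ), hy⟩, by ext; simp⟩
        · rintro ⟨x, rfl⟩
          simpa using x.isLt
      rw [himg, Finset.card_image_of_injective _ (Fin.castLE_injective _),
        Finset.card_univ, Fintype.card_fin]
    have split1 := Finset.card_filter_add_card_filter_not
      (s := Finset.univ.filter (fun y : Fin (2 * m) => (y : ℕ) < m))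
      (p := fun x : Fin (2 * m) => (σ x : ℕ) < m)
    have split2 := Finset.card_filter_add_card_filter_not
      (s := Finset.univ.filter (fun x : Fin (2 * m) => (σ x : ℕ) < m))
      (p := fun x : Fin (2 * m) => (x : ℕ) < m)
    rw [Finset.filter_filter] at split1 split2
    have hT1 : ((Finset.univ.filter (fun y : Fin (2 * m) => (y : ℕ) < m)).filter
        (fun x : Fin (2 * m) => ¬ (σ x : ℕ) < m)) = T := by
      rw [hTdef]; ext x; simp [Finset.mem_filter, Nat.not_lt]
    have hS1 : ((Finset.univ.filter (fun x : Fin (2 * m) => (σ x : ℕ) < m)).filter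
        (fun x : Fin (2 * m) => ¬ (x : ℕ) < m)) = S := by
      rw [hSdef]; ext x; simp [Finset.mem_filter, Nat.not_lt, and_comm]
    rw [hT1] at split1
    rw [hS1] at split2
    have hA : (Finset.univ.filter
        (fun x : Fin (2 * m) => (x : ℕ) < m ∧ (σ x : ℕ) < m))
        = (Finset.univ.filter
        (fun x : Fin (2 * m) => (σ x : ℕ) < m ∧ (x : ℕ) < m)) := by
      ext x; simp [and_comm]
    rw [hA] at split1
    have hTcard : T.card = t := by omega
    refine ⟨fun k => S.orderEmbOfFin hcard k, fun k => T.orderEmbOfFin hTcard k,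
      ?_, ?_, ?_, ?_, ?_, ?_, ?_, ?_⟩
    · exact fun a b h => (S.orderEmbOfFin hcard).strictMono h
    · exact fun a b h => (T.orderEmbOfFin hTcard).strictMono h
    · intro k
      have := Finset.mem_filter.mp (S.orderEmbOfFin_mem hcard k)
      exact this.2.1
    · intro k
      have := Finset.mem_filter.mp (T.orderEmbOfFin_mem hTcard k)
      exact this.2.1
    · intro k
      have h1 := Finset.mem_filter.mp (S.orderEmbOfFin_mem hcard k)
      have h2 := hbd (S.orderEmbOfFin hcard k)
      refine ⟨?_, h1.2.2⟩
      beta_reduce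
      omega
    · intro l hl hns
      by_contra hc
      push_neg at hc
      have hlS : l ∈ S := by rw [hSdef]; simp [hl, hc]
      obtain ⟨k, hk⟩ := (S.orderIsoOfFin hcard).surjective ⟨l, hlS⟩
      exact hns k (congrArg Subtype.val hk).symm
    · intro k
      have h1 := Finset.mem_filter.mp (T.orderEmbOfFin_mem hTcard k)
      have h2 := hbd (T.orderEmbOfFin hTcard k)
      refine ⟨h1.2.2, ?_⟩
      beta_reduce
      omega
    · intro l hl hns
      by_contra hc
      push_neg at hc
      have hlT : l ∈ T := by rw [hTdef]; simp [hl, hc]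
      obtain ⟨k, hk⟩ := (T.orderIsoOfFin hTcard).surjective ⟨l, hlT⟩
      exact hns k (congrArg Subtype.val hk).symm
  · rintro ⟨J, I, hJmono, hImono, hJm, hIm, h1, h2, h3, h4⟩
    constructor
    · intro i
      have hi2 := i.isLt
      have hσ2 := (σ i).isLt
      by_cases him : (i : ℕ) < m
      · by_cases hex : ∃ k, i = I k
        · obtain ⟨k, rfl⟩ := hex
          have := h3 k
          omega
        · push_neg at hex
          have := h4 i him hex
          omega
      · by_cases hex : ∃ k, i = J k
        · obtain ⟨k, rfl⟩ := hex
          have := h1 k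
          have := hJm k
          omega
        · push_neg at hex
          have := h2 i (by omega) hex
          omega
    · have himg : Finset.univ.filter
          (fun j : Fin (2 * m) => m ≤ (j : ℕ) ∧ (σ j : ℕ) < m)
          = Finset.univ.image J := by
        ext l
        simp only [Finset.mem_filter, Finset.mem_univ, true_and, Finset.mem_image]
        constructor
        · rintro ⟨hl1, hl2⟩
          by_contra hc
          push_neg at hc
          have := h2 l hl1 (fun k h => hc k h.symm)
          omega
        · rintro ⟨k, -, rfl⟩
          exact ⟨hJm k, (h1 k).2⟩
      rw [himg, Finset.card_image_of_injective _ hJmono.injective,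
        Finset.card_univ, Fintype.card_fin]
end

section
/- Let m ≥ 2 be an integer. For every t ∈ {0,…,m}, the cardinality of 𝒮_t equals ((m−t)! · u(m,t))², where u(m,t) = Σ_{1 ≤ i₁ < ⋯ < i_t ≤ m} i₁·(i₂ − 1)⋯(i_t − (t−1)). -/
/-- `u m t = Σ_{1 ≤ i₁ < ⋯ < i_t ≤ m} ∏_{k=1}^t (i_k − (k−1))`, the sum being over
all strictly increasing `t`-tuples in `{1,…,m}` (so `u m 0 = 1`).
A tuple is encoded by a strictly monotone function `f : Fin t → Fin m`,
with `i_k = (f ⟨k-1⟩ : ℕ) + 1`; the factor `i_k − (k−1)` is `(f k : ℕ) + 1 - (k : ℕ)`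
for `k : Fin t` (0-indexed). -/
def u (m t : ℕ) : ℕ :=
  ∑ f ∈ Finset.univ.filter (fun f : Fin t → Fin m => ∀ a b : Fin t, a < b → f a < f b),
    ∏ k : Fin t, ((f k : ℕ) + 1 - (k : ℕ))

/-!
Write `Fin (2 * m)` as two blocks `Fin m ⊕ Fin m`. The constraint `|σ i - i| ≤ m` only concerns
the edges of `σ` between the blocks: an edge `a ↦ m + b` or `m + b ↦ a` is allowed iff `b ≤ a`.
The left-to-right edges and the right-to-left edges of `σ` therefore form two rook placements on
the staircase board `{(a, b) | b ≤ a}`, with `t` rooks each. Every pair of such placements arises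
from exactly `(m - t)! ^ 2` permutations: those carrying a fixed labelling of the points (by the
crossing edge through them, or by their block) to another fixed labelling, which are counted
like the stabilizer of a function (`DomMulAct.stabilizer_card`). Finally, the staircase
placements with rooks in rows `i₁ < ⋯ < i_t` number `∏ₖ (i_k - (k - 1))`: the `k`-th rook has
`i_k` admissible columns, `k - 1` of which are taken by the rooks in the rows below.
-/

open Finset Function Equiv Sum
open scoped Nat

theorem Fintype.card_equiv_comp_eq {α β γ : Type*} [Fintype α] [Fintype β] [Fintype γ]
    [DecidableEq α] [DecidableEq β] [DecidableEq γ] (f : α → γ) (g : β → γ)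
    (hfg : ∀ c, Fintype.card {a // f a = c} = Fintype.card {b // g b = c}) :
    Fintype.card {e : α ≃ β // g ∘ e = f} = ∏ c, (Fintype.card {a // f a = c})! := by
  obtain ⟨e₀, he₀⟩ : ∃ e₀ : α ≃ β, g ∘ e₀ = f :=
    ⟨_, funext (Equiv.ofFiberEquiv_map fun c => Fintype.equivOfCardEq (hfg c))⟩
  replace he₀ : f ∘ e₀.symm = g := by rw [← he₀]; ext; simp
  rw [← DomMulAct.stabilizer_card f]
  refine Fintype.card_congr ((Equiv.refl α).equivCongr e₀.symm |>.subtypeEquiv fun e => ?_)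
  rw [← he₀]
  constructor <;> intro h <;> funext a <;> simpa using congrFun h a

namespace Equiv.Perm

variable {X : Type*} [Fintype X] (σ : Perm X) (p : X → Prop) [DecidablePred p]

theorem card_exits_eq_card_entries : #{x | p x ∧ ¬p (σ x)} = #{x | ¬p x ∧ p (σ x)} := by
  have hexit := card_filter_add_card_filter_not (s := {x | p x}) (p := fun x => p (σ x))
  have hentry := card_filter_add_card_filter_not (s := {x | p (σ x)}) (p := p)
  have hσ : #{x | p (σ x)} = #{x | p x} := card_equiv σ (by simp)
  simp only [filter_filter] at hexit hentry
  rw [filter_congr fun x _ => and_comm] at hentry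
  rw [filter_congr fun x _ => and_comm (a := ¬p x)]
  omega

theorem card_entries_eq_card_exits_inv : #{x | ¬p x ∧ p (σ x)} = #{x | p x ∧ ¬p (σ⁻¹ x)} :=
  card_equiv σ fun x => by simp [and_comm]

end Equiv.Perm

theorem Fintype.card_subtype_sum {α β : Type*} [Fintype α] [Fintype β] (p : α ⊕ β → Prop)
    [DecidablePred p] :
    Fintype.card {x // p x} = #{a | p (inl a)} + #{b | p (inr b)} := by
  rw [Fintype.card_congr Equiv.subtypeSum, Fintype.card_sum, Fintype.card_subtype,
    Fintype.card_subtype]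

theorem card_filter_isLeft_and {α β : Type*} [Fintype α] [Fintype β] (p : α ⊕ β → Prop)
    [DecidablePred p] : #{x | x.isLeft ∧ p x} = #{a | p (inl a)} := by
  rw [← Fintype.card_subtype, Fintype.card_subtype_sum]
  simp

theorem card_filter_and_eq {γ : Type*} [Fintype γ] [DecidableEq γ] (p : γ → Prop)
    [DecidablePred p] (y : γ) : #{x | p x ∧ x = y} = if p y then 1 else 0 := by
  have : ({x | p x ∧ x = y} : Finset γ) = if p y then {y} else ∅ := by
    ext x; by_cases hx : x = y <;> split_ifs <;> simp_all
  rw [this]; split_ifs <;> simp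

theorem card_filter_eq_none {α β : Type*} [Fintype α] (P : α → Option β) :
    #{a | P a = none} = Fintype.card α - #{a | P a ≠ none} := by
  have := card_filter_add_card_filter_not (s := (univ : Finset α)) (p := fun a => P a = none)
  rw [Finset.card_univ] at this
  simp only [ne_eq]
  omega

def IsPartialInj {α β : Type*} (P : α → Option β) : Prop :=
  ∀ a a' b, P a = some b → P a' = some b → a = a'

namespace IsPartialInj

variable {α β : Type*} [Fintype α] [DecidableEq β] {P : α → Option β}

instance [Fintype β] [DecidableEq α] : Decidable (IsPartialInj P) := by
  unfold IsPartialInj; infer_instance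

theorem card_filter_eq_some (hP : IsPartialInj P) (b : β) :
    #{a | P a = some b} = if ∃ a, P a = some b then 1 else 0 := by
  split_ifs with h
  · obtain ⟨a, ha⟩ := h
    exact card_eq_one.mpr ⟨a, eq_singleton_iff_unique_mem.mpr
      ⟨by simpa using ha, fun a' ha' => hP _ _ _ (by simpa using ha') ha⟩⟩
  · simpa using h

variable [Fintype β]

theorem card_range (hP : IsPartialInj P) : #{b | ∃ a, P a = some b} = #{a | P a ≠ none} := by
  symm
  refine card_bij (fun a ha => (P a).get (Option.isSome_iff_ne_none.mpr (mem_filter.mp ha).2))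
    (fun a ha => by simp only [mem_filter, mem_univ, true_and]; exact ⟨a, by simp⟩)
    (fun a ha a' ha' h => hP a a' _ (Option.some_get _).symm (by rw [h, Option.some_get]))
    fun b hb => ?_
  obtain ⟨a, ha⟩ := (mem_filter.mp hb).2
  exact ⟨a, by simp [ha], by simp [ha]⟩

theorem card_filter_forall_ne (hP : IsPartialInj P) :
    #{b | ∀ a, P a ≠ some b} = Fintype.card β - #{a | P a ≠ none} := by
  have := card_filter_add_card_filter_not (s := (univ : Finset β)) (p := fun b => ∃ a, P a = some b)
  rw [Finset.card_univ, hP.card_range] at this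
  simp only [not_exists, ne_eq] at this ⊢
  omega

end IsPartialInj

namespace Equiv.Perm

variable {α β : Type*}

/-- For `τ⁻¹`, this records the right-to-left edges of `τ`, indexed by their left endpoint. -/
def leftToRight (τ : Perm (α ⊕ β)) (a : α) : Option β := (τ (inl a)).getRight?

theorem isPartialInj_leftToRight (τ : Perm (α ⊕ β)) : IsPartialInj (leftToRight τ) :=
  fun a a' b ha ha' => by
    simp only [leftToRight, getRight?_eq_some_iff] at ha ha'
    simpa using τ.injective (ha.trans ha'.symm)

variable [Fintype α] [Fintype β]

theorem card_leftToRight_ne_none (τ : Perm (α ⊕ β)) :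
    #{a | leftToRight τ a ≠ none} = #{x | x.isLeft ∧ ¬(τ x).isLeft} := by
  rw [card_filter_isLeft_and]
  simp [leftToRight]

theorem card_leftToRight_inv_ne_none (τ : Perm (α ⊕ β)) :
    #{a | leftToRight τ⁻¹ a ≠ none} = #{a | leftToRight τ a ≠ none} := by
  rw [card_leftToRight_ne_none, card_leftToRight_ne_none]
  exact (card_entries_eq_card_exits_inv τ _).symm.trans (card_exits_eq_card_entries τ _).symm

end Equiv.Perm

open Equiv.Perm

section Labels

variable {α β : Type*} [Fintype α] [DecidableEq β]

/- The two labels of an edge `x ↦ τ x` of a permutation `τ` with `leftToRight τ = P` and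
`leftToRight τ⁻¹ = Q`, read off at `x` and at `τ x`: whether the edge starts in the left block
and, if it crosses between the blocks, its endpoint in the right block. -/

def sourceLabel (P Q : α → Option β) : α ⊕ β → Bool × Option β
  | inl a => (true, P a)
  | inr b => if ∃ a, Q a = some b then (false, some b) else (false, none)

def targetLabel (P Q : α → Option β) : α ⊕ β → Bool × Option β
  | inl a => ((Q a).isNone, Q a)
  | inr b => if ∃ a, P a = some b then (true, some b) else (false, none)

section

variable (τ : Perm (α ⊕ β))

theorem targetLabel_comp_eq_sourceLabel [DecidableEq α] :
    targetLabel (leftToRight τ) (leftToRight τ⁻¹) ∘ τ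
      = sourceLabel (leftToRight τ) (leftToRight τ⁻¹) := by
  have inv_eq {x y} (h : τ x = y) : τ⁻¹ y = x := by rw [← h]; simp
  funext x
  obtain a | b := x
  · obtain ⟨a', hx⟩ | ⟨b', hx⟩ : (∃ a', τ (inl a) = inl a') ∨ ∃ b', τ (inl a) = inr b' := by
      cases τ (inl a) <;> simp
    · simp [targetLabel, sourceLabel, leftToRight, hx, inv_eq hx]
    · simpa [targetLabel, sourceLabel, leftToRight, hx] using ⟨a, hx⟩
  · obtain ⟨a', hx⟩ | ⟨b', hx⟩ : (∃ a', τ (inr b) = inl a') ∨ ∃ b', τ (inr b) = inr b' := by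
      cases τ (inr b) <;> simp
    · simpa [targetLabel, sourceLabel, leftToRight, hx, inv_eq hx] using ⟨a', inv_eq hx⟩
    · have h₁ : ¬∃ a, τ (inl a) = inr b' := fun ⟨a, ha⟩ => by
        simpa using τ.injective (ha.trans hx.symm)
      have h₂ : ∀ a, τ.symm (inl a) ≠ inr b := fun a ha => by
        simpa [hx] using congrArg τ ha
      simp [targetLabel, sourceLabel, leftToRight, hx, h₁, h₂]

theorem leftToRight_eq_of_targetLabel_comp {P Q : α → Option β}
    (h : targetLabel P Q ∘ τ = sourceLabel P Q) : leftToRight τ = P ∧ leftToRight τ⁻¹ = Q := by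
  have inv_eq {x y} (h : τ x = y) : τ⁻¹ y = x := by rw [← h]; simp
  constructor
  · funext a
    have := congrFun h (inl a)
    rcases hx : τ (inl a) with a' | b' <;>
      simp only [comp_apply, targetLabel, sourceLabel, leftToRight, hx] at this ⊢
    · simp at this
      exact this.1.symm.trans this.2
    · split_ifs at this <;> simp_all
  · funext a
    obtain ⟨x, hx⟩ := τ.surjective (inl a)
    have := congrFun h x
    rw [comp_apply, hx] at this
    simp only [leftToRight, inv_eq hx]
    obtain a' | b := x
    · simp [targetLabel, sourceLabel] at this
      simp [this.1]
    · simp [targetLabel, sourceLabel] at this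
      split_ifs at this with hb
      · simp_all
      · simp at this
        simp [this.2] at this

theorem leftToRight_eq_and_inv_iff [DecidableEq α] (P Q : α → Option β) :
    leftToRight τ = P ∧ leftToRight τ⁻¹ = Q ↔ targetLabel P Q ∘ τ = sourceLabel P Q :=
  ⟨fun ⟨hP, hQ⟩ => hP ▸ hQ ▸ targetLabel_comp_eq_sourceLabel τ,
    leftToRight_eq_of_targetLabel_comp τ⟩

end

variable [Fintype β]

theorem card_fiber_sourceLabel_eq {P Q : α → Option β} (hP : IsPartialInj P)
    (hQ : IsPartialInj Q) (hPQ : #{a | P a ≠ none} = #{a | Q a ≠ none}) (l : Bool × Option β) :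
    Fintype.card {x // sourceLabel P Q x = l} = Fintype.card {x // targetLabel P Q x = l} := by
  have h₁ (a : α) (b : β) : (Q a ≠ none ∧ Q a = some b) ↔ Q a = some b :=
    ⟨And.right, fun h => ⟨by simp [h], h⟩⟩
  have h₂ (a : α) (b : β) : ¬(Q a = none ∧ Q a = some b) := fun h => by simp [h.1] at h
  rw [Fintype.card_subtype_sum, Fintype.card_subtype_sum]
  obtain ⟨_ | _, _ | b⟩ := l <;>
    simp [sourceLabel, targetLabel, ite_eq_iff, Option.isSome_iff_ne_none, h₁, h₂]
  · rw [hP.card_filter_forall_ne, hQ.card_filter_forall_ne, hPQ]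
  · rw [card_filter_and_eq, hQ.card_filter_eq_some]
  · rw [card_filter_eq_none, card_filter_eq_none, hPQ]
  · rw [card_filter_and_eq, hP.card_filter_eq_some]

theorem card_leftToRight_eq_and_inv_eq [DecidableEq α] {P Q : α → Option β} (hP : IsPartialInj P)
    (hQ : IsPartialInj Q) {t : ℕ} (hPt : #{a | P a ≠ none} = t) (hQt : #{a | Q a ≠ none} = t) :
    #{τ : Perm (α ⊕ β) | leftToRight τ = P ∧ leftToRight τ⁻¹ = Q}
      = (Fintype.card α - t)! * (Fintype.card β - t)! := by
  simp_rw [leftToRight_eq_and_inv_iff]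
  rw [← Fintype.card_subtype,
    Fintype.card_equiv_comp_eq _ _ (card_fiber_sourceLabel_eq hP hQ (hPt.trans hQt.symm)),
    Fintype.prod_prod_type, Fintype.prod_bool, Fintype.prod_option, Fintype.prod_option]
  simp only [Fintype.card_subtype_sum]
  simp [sourceLabel, ite_eq_iff, hP.card_filter_eq_some, card_filter_and_eq, apply_ite,
    card_filter_eq_none, hQ.card_filter_forall_ne, hPt, hQt]

theorem card_leftToRight_mem [DecidableEq α] (R₁ R₂ : Finset (α → Option β)) {t : ℕ}
    (hR₁ : ∀ P ∈ R₁, IsPartialInj P ∧ #{a | P a ≠ none} = t)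
    (hR₂ : ∀ Q ∈ R₂, IsPartialInj Q ∧ #{a | Q a ≠ none} = t) :
    #{τ : Perm (α ⊕ β) | leftToRight τ ∈ R₁ ∧ leftToRight τ⁻¹ ∈ R₂}
      = #R₁ * #R₂ * ((Fintype.card α - t)! * (Fintype.card β - t)!) := by
  rw [card_eq_sum_card_fiberwise (f := fun τ => (leftToRight τ, leftToRight τ⁻¹))
    (t := R₁ ×ˢ R₂) (fun τ hτ => by simpa using hτ), ← card_product, ← smul_eq_mul, ← sum_const]
  refine sum_congr rfl fun ⟨P, Q⟩ hPQ => ?_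
  obtain ⟨hP, hQ⟩ := mem_product.mp hPQ
  rw [filter_filter, ← card_leftToRight_eq_and_inv_eq (hR₁ P hP).1 (hR₂ Q hQ).1 (hR₁ P hP).2
    (hR₂ Q hQ).2]
  congr 1
  refine filter_congr fun τ _ => ?_
  simp only [Prod.mk.injEq]
  constructor
  · exact And.right
  · rintro ⟨rfl, rfl⟩
    exact ⟨⟨hP, hQ⟩, rfl, rfl⟩

end Labels

theorem card_injective_le_of_strictMono {m : ℕ} :
    ∀ {t : ℕ} (f : Fin t → Fin m), StrictMono f →
      #{h : Fin t → Fin m | Injective h ∧ ∀ k, h k ≤ f k} = ∏ k, ((f k : ℕ) + 1 - k)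
  | 0, f, _ => by simp [Function.injective_of_subsingleton]
  | t + 1, f, hf => by
    set H' : Finset (Fin t → Fin m) := {h | Injective h ∧ ∀ k, h k ≤ f k.castSucc}
    have hrange (h : Fin t → Fin m) (hh : h ∈ H') : image h univ ⊆ Iic (f (.last t)) := by
      intro v hv
      obtain ⟨k, -, rfl⟩ := mem_image.mp hv
      exact mem_Iic.mpr (((mem_filter.mp hh).2.2 k).trans (hf k.castSucc_lt_last).le)
    have hmem (h : Fin (t + 1) → Fin m) : (Injective h ∧ ∀ k, h k ≤ f k) ↔
        Fin.init h ∈ H' ∧ h (.last t) ∈ Iic (f (.last t)) \ image (Fin.init h) univ := by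
      conv_lhs => rw [← Fin.snoc_init_self h, Fin.snoc_injective_iff, Fin.forall_iff_castSucc]
      simp [H', Fin.init]
      tauto
    have hsplit : #{h : Fin (t + 1) → Fin m | Injective h ∧ ∀ k, h k ≤ f k}
        = #(H'.sigma fun h => Iic (f (.last t)) \ image h univ) := by
      refine card_nbij' (fun h => ⟨Fin.init h, h (.last t)⟩) (fun p => Fin.snoc p.1 p.2)
        (fun h hh => ?_) (fun p hp => ?_) (fun h _ => by simp) (fun p _ => by simp)
      · exact mem_sigma.mpr ((hmem h).mp (mem_filter.mp hh).2)
      · refine mem_filter.mpr ⟨mem_univ _, (hmem _).mpr ?_⟩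
        simpa using mem_sigma.mp hp
    have ih : #H' = ∏ k : Fin t, ((f k.castSucc : ℕ) + 1 - k) :=
      card_injective_le_of_strictMono _ (hf.comp Fin.strictMono_castSucc)
    rw [hsplit, Finset.card_sigma, sum_congr rfl fun h hh => by
      rw [card_sdiff_of_subset (hrange h hh), Fin.card_Iic,
        card_image_of_injective _ (mem_filter.mp hh).2.1, card_univ, Fintype.card_fin],
      sum_const, smul_eq_mul, ih, Fin.prod_univ_castSucc]
    simp

/-- Placements of `t` non-attacking rooks on the staircase board `{(a, b) | b ≤ a}`, where
`P a = some b` is a rook in row `a` and column `b`. -/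
def stairRooks (m t : ℕ) : Finset (Fin m → Option (Fin m)) :=
  {P | IsPartialInj P ∧ (∀ a b, P a = some b → b ≤ a) ∧ #{a | P a ≠ none} = t}

theorem mem_stairRooks {m t : ℕ} {P : Fin m → Option (Fin m)} :
    P ∈ stairRooks m t ↔
      IsPartialInj P ∧ (∀ a b, P a = some b → b ≤ a) ∧ #{a | P a ≠ none} = t := by
  simp [stairRooks]

section Extend

variable {ι α β : Type*} {f : ι → α} (h : ι → β) (a : α)

theorem extend_some_eq_some_iff (hf : Injective f) (b : β) :
    extend f (some ∘ h) (fun _ => none) a = some b ↔ ∃ k, f k = a ∧ h k = b := by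
  by_cases ha : ∃ k, f k = a
  · obtain ⟨k, rfl⟩ := ha
    simp [hf.extend_apply, hf.eq_iff]
  · simp only [extend_apply' _ _ _ ha, reduceCtorEq, false_iff, not_exists, not_and]
    exact fun k hk => (ha ⟨k, hk⟩).elim

theorem extend_some_ne_none_iff (hf : Injective f) :
    extend f (some ∘ h) (fun _ => none) a ≠ none ↔ ∃ k, f k = a := by
  by_cases ha : ∃ k, f k = a
  · obtain ⟨k, rfl⟩ := ha
    simp [hf.extend_apply]
  · simp [ha]

end Extend

section StairRooks

variable {m t : ℕ}

theorem extend_some_mem_stairRooks {f h : Fin t → Fin m} (hf : StrictMono f) (hh : Injective h)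
    (hle : ∀ k, h k ≤ f k) : extend f (some ∘ h) (fun _ => none) ∈ stairRooks m t := by
  simp only [mem_stairRooks, IsPartialInj, extend_some_eq_some_iff _ _ hf.injective,
    extend_some_ne_none_iff _ _ hf.injective]
  refine ⟨?_, ?_, ?_⟩
  · rintro _ _ _ ⟨k, rfl, rfl⟩ ⟨k', rfl, hk⟩
    rw [hh hk]
  · rintro _ _ ⟨k, rfl, rfl⟩
    exact hle k
  · have : ({a | ∃ k, f k = a} : Finset (Fin m)) = image f univ := by ext; simp
    rw [this, card_image_of_injective _ hf.injective, card_univ, Fintype.card_fin]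

theorem eq_of_extend_some_eq {f f' h h' : Fin t → Fin m} (hf : StrictMono f) (hf' : StrictMono f')
    (heq : extend f (some ∘ h) (fun _ => none) = extend f' (some ∘ h') (fun _ => none)) :
    f = f' ∧ h = h' := by
  have hdom a := congrArg (· ≠ none) (congrFun heq a)
  simp only [extend_some_ne_none_iff _ _ hf.injective, extend_some_ne_none_iff _ _ hf'.injective,
    eq_iff_iff] at hdom
  obtain rfl : f = f' := (StrictMono.range_inj hf hf').mp (Set.ext hdom)
  refine ⟨rfl, funext fun k => ?_⟩
  simpa [hf.injective.extend_apply] using congrFun heq (f k)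

theorem exists_extend_some_eq {P : Fin m → Option (Fin m)} (hP : P ∈ stairRooks m t) :
    ∃ f h : Fin t → Fin m, StrictMono f ∧ Injective h ∧ (∀ k, h k ≤ f k) ∧
      extend f (some ∘ h) (fun _ => none) = P := by
  obtain ⟨hinj, hle, hcard⟩ := mem_stairRooks.mp hP
  set f := ({a | P a ≠ none} : Finset (Fin m)).orderEmbOfFin hcard
  have hfP (k : Fin t) : P (f k) ≠ none := (mem_filter.mp (orderEmbOfFin_mem _ hcard k)).2
  set h : Fin t → Fin m := fun k => (P (f k)).get (Option.isSome_iff_ne_none.mpr (hfP k))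
  have hPh (k : Fin t) : P (f k) = some (h k) := by simp [h]
  refine ⟨f, h, f.strictMono, fun k k' hk => f.injective (hinj _ _ _ (hPh k) (hk ▸ hPh k')),
    fun k => hle _ _ (hPh k), funext fun a => ?_⟩
  by_cases ha : ∃ k, f k = a
  · obtain ⟨k, rfl⟩ := ha
    rw [f.injective.extend_apply, comp_apply, hPh]
  · rw [extend_apply' _ _ _ ha]
    by_contra hPa
    have : a ∈ Set.range f := by
      rw [range_orderEmbOfFin]
      simpa using Ne.symm hPa
    exact ha this

theorem card_stairRooks (m t : ℕ) : #(stairRooks m t) = u m t := by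
  set SM : Finset (Fin t → Fin m) := {f | ∀ a b : Fin t, a < b → f a < f b}
  have mem_SM {f} : f ∈ SM ↔ StrictMono f := by simp [SM, StrictMono]
  rw [u, ← sum_congr rfl fun f hf => card_injective_le_of_strictMono f (mem_SM.mp hf),
    ← Finset.card_sigma]
  symm
  refine card_bij (fun p _ => extend p.1 (some ∘ p.2) fun _ => none) (fun p hp => ?_)
    (fun ⟨f, h⟩ hp ⟨f', h'⟩ hp' heq => ?_) (fun P hP => ?_)
  · simp only [mem_sigma, mem_SM, mem_filter, mem_univ, true_and] at hp
    exact extend_some_mem_stairRooks hp.1 hp.2.1 hp.2.2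
  · simp only [mem_sigma, mem_SM] at hp hp'
    obtain ⟨rfl, rfl⟩ := eq_of_extend_some_eq hp.1 hp'.1 heq
    rfl
  · obtain ⟨f, h, hf, hh, hle, rfl⟩ := exists_extend_some_eq hP
    exact ⟨⟨f, h⟩, by simp [mem_SM, hf, hh, hle], rfl⟩

end StairRooks

def finTwoMulEquiv (m : ℕ) : Fin m ⊕ Fin m ≃ Fin (2 * m) :=
  finSumFinEquiv.trans (finCongr (two_mul m).symm)

@[simp] theorem finTwoMulEquiv_inl_val {m : ℕ} (a : Fin m) :
    (finTwoMulEquiv m (inl a) : ℕ) = a := by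
  simp [finTwoMulEquiv]

@[simp] theorem finTwoMulEquiv_inr_val {m : ℕ} (b : Fin m) :
    (finTwoMulEquiv m (inr b) : ℕ) = m + b := by
  simp [finTwoMulEquiv, Nat.add_comm]

section Transport

variable {m : ℕ} (τ : Perm (Fin m ⊕ Fin m))

theorem bounded_permCongr_iff :
    (∀ i : Fin (2 * m), -(m : ℤ) ≤ (((finTwoMulEquiv m).permCongr τ i : ℕ) : ℤ) - ((i : ℕ) : ℤ) ∧
      (((finTwoMulEquiv m).permCongr τ i : ℕ) : ℤ) - ((i : ℕ) : ℤ) ≤ m) ↔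
      (∀ a b, leftToRight τ a = some b → b ≤ a) ∧ (∀ a b, leftToRight τ⁻¹ a = some b → b ≤ a) := by
  rw [(finTwoMulEquiv m).symm.forall_congr_left]
  simp only [symm_symm, permCongr_apply, symm_apply_apply, Sum.forall, leftToRight,
    getRight?_eq_some_iff, Perm.inv_eq_iff_eq, Fin.le_def]
  constructor
  · rintro ⟨hL, hR⟩
    refine ⟨fun a b h => ?_, fun a b h => ?_⟩
    · have := hL a; rw [h] at this; simp at this; omega
    · have := hR b; rw [← h] at this; simp at this; omega
  · rintro ⟨hL, hR⟩
    refine ⟨fun a => ?_, fun b => ?_⟩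
    · rcases h : τ (inl a) with a' | b
      · simp; omega
      · have := hL a b h; simp; omega
    · rcases h : τ (inr b) with a | b'
      · have := hR a b h.symm; simp; omega
      · simp; omega

theorem card_rightToLeft_permCongr :
    #{j : Fin (2 * m) | m ≤ (j : ℕ) ∧ ((finTwoMulEquiv m).permCongr τ j : ℕ) < m}
      = #{a | leftToRight τ a ≠ none} := by
  have hcross : #{j : Fin (2 * m) | m ≤ (j : ℕ) ∧ ((finTwoMulEquiv m).permCongr τ j : ℕ) < m}
      = #{x | ¬x.isLeft ∧ (τ x).isLeft} := by
    refine (card_equiv (finTwoMulEquiv m) fun x => ?_).symm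
    rw [mem_filter, mem_filter, permCongr_apply, symm_apply_apply]
    rcases x with a | b <;> rcases τ _ with a' | b' <;> simp
  rw [hcross, ← card_exits_eq_card_entries, card_leftToRight_ne_none]

end Transport

theorem card_bounded_perm_eq (m t : ℕ) :
    (Finset.univ.filter (fun σ : Equiv.Perm (Fin (2 * m)) =>
        (∀ i : Fin (2 * m), -(m : ℤ) ≤ ((σ i : ℕ) : ℤ) - ((i : ℕ) : ℤ) ∧
          ((σ i : ℕ) : ℤ) - ((i : ℕ) : ℤ) ≤ (m : ℤ)) ∧
        (Finset.univ.filter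
          (fun j : Fin (2 * m) => m ≤ (j : ℕ) ∧ (σ j : ℕ) < m)).card = t)).card
      = #{τ : Perm (Fin m ⊕ Fin m) | leftToRight τ ∈ stairRooks m t ∧
          leftToRight τ⁻¹ ∈ stairRooks m t} := by
  refine (card_equiv (finTwoMulEquiv m).permCongr fun τ => ?_).symm
  simp only [mem_filter, mem_univ, true_and, mem_stairRooks, bounded_permCongr_iff,
    card_rightToLeft_permCongr, card_leftToRight_inv_ne_none]
  have hτ := isPartialInj_leftToRight τ
  have hτ' := isPartialInj_leftToRight τ⁻¹
  tauto

theorem stmt7_general (m : ℕ) (t : ℕ) :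
    (Finset.univ.filter (fun σ : Equiv.Perm (Fin (2 * m)) =>
        (∀ i : Fin (2 * m), -(m : ℤ) ≤ ((σ i : ℕ) : ℤ) - ((i : ℕ) : ℤ) ∧
          ((σ i : ℕ) : ℤ) - ((i : ℕ) : ℤ) ≤ (m : ℤ)) ∧
        (Finset.univ.filter
          (fun j : Fin (2 * m) => m ≤ (j : ℕ) ∧ (σ j : ℕ) < m)).card = t)).card
      = ((m - t).factorial * u m t) ^ 2 := by
  have hrooks (P) (hP : P ∈ stairRooks m t) : IsPartialInj P ∧ #{a | P a ≠ none} = t :=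
    have h := mem_stairRooks.mp hP; ⟨h.1, h.2.2⟩
  rw [card_bounded_perm_eq, card_leftToRight_mem _ _ hrooks hrooks, card_stairRooks,
    Fintype.card_fin]
  ring

theorem stmt7 (m : ℕ) (hm : 2 ≤ m) (t : ℕ) (ht : t ≤ m) :
    (Finset.univ.filter (fun σ : Equiv.Perm (Fin (2 * m)) =>
        (∀ i : Fin (2 * m), -(m : ℤ) ≤ ((σ i : ℕ) : ℤ) - ((i : ℕ) : ℤ) ∧
          ((σ i : ℕ) : ℤ) - ((i : ℕ) : ℤ) ≤ (m : ℤ)) ∧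
        (Finset.univ.filter
          (fun j : Fin (2 * m) => m ≤ (j : ℕ) ∧ (σ j : ℕ) < m)).card = t)).card
      = ((m - t).factorial * u m t) ^ 2 :=
  stmt7_general m t
end

section
/- Let m ≥ 2 be an integer. Then Σ_{t=0}^{m} (t! · S(m+1, t+1))² = (−1)^m · Σ_{i=0}^{m} (−1)^i · i! · (i+1)^m · S(m,i), as an equality of integers. (Both sides count the permutations σ of {1,…,2m} with |σ(i) − i| ≤ m for all i, partitioned according to the number t of indices j ∈ {m+1,…,2m} with σ(j) ≤ m.) -/
open Finset

lemma stirling_succ_succ (n k : ℕ) :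
    stirling (n + 1) (k + 1) = (k + 1) * stirling n (k + 1) + stirling n k := rfl

lemma stirling_succ_zero (n : ℕ) : stirling (n + 1) 0 = 0 := rfl

lemma stirling_eq_zero : ∀ n k, n < k → stirling n k = 0 := by
  intro n
  induction n with
  | zero =>
      intro k hk
      cases k with
      | zero => omega
      | succ j => rfl
  | succ n ih =>
      intro k hk
      cases k with
      | zero => omega
      | succ j =>
          rw [stirling_succ_succ, ih (j+1) (by omega), ih j (by omega)]
          simp

lemma stirling_one (n : ℕ) : stirling (n + 1) 1 = 1 := by
  induction n with
  | zero => rfl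
  | succ n ih => rw [stirling_succ_succ, ih, stirling_succ_zero]

/-- Inversion formula for Stirling numbers. -/
lemma stirling_inv (n : ℕ) : ∀ t : ℕ,
    (Nat.factorial t : ℤ) * (stirling (n + 1) (t + 1) : ℤ)
      = ∑ i ∈ range (t + 1), (-1) ^ (t + i) * (t.choose i : ℤ) * ((i : ℤ) + 1) ^ n := by
  induction n with
  | zero =>
      intro t
      cases t with
      | zero => simp [stirling]
      | succ s =>
          rw [stirling_eq_zero 1 (s+2) (by omega)]
          have h : ∑ i ∈ range (s + 1 + 1), (-1 : ℤ) ^ (s + 1 + i) * ((s+1).choose i : ℤ)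
              * ((i : ℤ) + 1) ^ (0:ℕ)
              = (-1) ^ (s+1) * ∑ i ∈ range (s + 1 + 1), (-1 : ℤ) ^ i * ((s+1).choose i : ℤ) := by
            rw [mul_sum]
            refine sum_congr rfl fun i _ => ?_
            rw [pow_add, pow_zero]
            ring
          rw [h, Int.alternating_sum_range_choose_of_ne (by omega : s + 1 ≠ 0)]
          simp
  | succ n ih =>
      intro t
      cases t with
      | zero =>
          simp only [Nat.factorial_zero, Nat.cast_one, one_mul, range_one, sum_singleton,
            Nat.choose_self]
          rw [stirling_succ_succ, stirling_succ_zero, stirling_one]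
          norm_num
      | succ s =>
          have hrec : ((s+1).factorial : ℤ) * (stirling (n+1+1) (s+1+1) : ℤ)
              = ((s:ℤ)+2) * (((s+1).factorial : ℤ) * (stirling (n+1) (s+1+1) : ℤ))
                + ((s:ℤ)+1) * ((s.factorial : ℤ) * (stirling (n+1) (s+1) : ℤ)) := by
            rw [stirling_succ_succ (n+1) (s+1)]
            push_cast [Nat.factorial_succ]
            ring
          rw [hrec, ih (s+1), ih s]
          have hext : ∑ i ∈ range (s + 1 + 1), (-1:ℤ) ^ (s + i) * (s.choose i : ℤ) * ((i:ℤ)+1) ^ n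
              = ∑ i ∈ range (s + 1), (-1:ℤ) ^ (s + i) * (s.choose i : ℤ) * ((i:ℤ)+1) ^ n := by
            rw [sum_range_succ, Nat.choose_eq_zero_of_lt (by omega : s < s + 1)]
            simp
          rw [← hext, mul_sum, mul_sum, ← sum_add_distrib]
          refine sum_congr rfl fun i hi => ?_
          have hi' : i ≤ s + 1 := by have := mem_range.mp hi; omega
          have hkey : ((s:ℤ) + 1 - (i:ℤ)) * ((s+1).choose i : ℤ)
              = ((s:ℤ) + 1) * (s.choose i : ℤ) := by
            have h2 : (s.choose i : ℤ) * ((s:ℤ) + 1)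
                = ((s+1).choose i : ℤ) * ((s + 1 - i : ℕ) : ℤ) := by
              exact_mod_cast Nat.choose_mul_succ_eq s i
            have h3 : ((s + 1 - i : ℕ) : ℤ) = (s:ℤ) + 1 - (i:ℤ) := by
              rw [Nat.cast_sub hi']; push_cast; ring
            rw [h3] at h2
            linarith [h2]
          linear_combination (-((-1:ℤ)^(s+i)) * ((i:ℤ)+1)^n) * hkey

/-- Key identity. -/
lemma key (n : ℕ) : ∀ i : ℕ,
    ∑ t ∈ range (n + 1),
        (-1) ^ (t + i) * (t.choose i : ℤ) * (t.factorial : ℤ) * (stirling (n+1) (t+1) : ℤ)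
      = (-1) ^ (n + i) * (i.factorial : ℤ) * (stirling n i : ℤ) := by
  induction n with
  | zero =>
      intro i
      cases i with
      | zero => simp [stirling]
      | succ j => simp [stirling, Nat.choose_eq_zero_of_lt (by omega : 0 < j + 1)]
  | succ n ih =>
      intro i
      have hsplit : ∑ t ∈ range (n + 1 + 1),
            (-1:ℤ) ^ (t + i) * (t.choose i : ℤ) * (t.factorial : ℤ) * (stirling (n+1+1) (t+1) : ℤ)
          = (∑ t ∈ range (n + 1 + 1),
              (-1:ℤ) ^ (t + i) * (t.choose i : ℤ) * (((t+1).factorial : ℤ)) * (stirling (n+1) (t+1) : ℤ))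
            + ∑ t ∈ range (n + 1 + 1),
              (-1:ℤ) ^ (t + i) * (t.choose i : ℤ) * (t.factorial : ℤ) * (stirling (n+1) t : ℤ) := by
        rw [← sum_add_distrib]
        refine sum_congr rfl fun t _ => ?_
        rw [stirling_succ_succ (n+1) t]
        push_cast [Nat.factorial_succ]
        ring
      have h1 : ∑ t ∈ range (n + 1 + 1),
            (-1:ℤ) ^ (t + i) * (t.choose i : ℤ) * (((t+1).factorial : ℤ)) * (stirling (n+1) (t+1) : ℤ)
          = ∑ t ∈ range (n + 1),
            (-1:ℤ) ^ (t + i) * (t.choose i : ℤ) * (((t+1).factorial : ℤ)) * (stirling (n+1) (t+1) : ℤ) := by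
        rw [sum_range_succ, stirling_eq_zero (n+1) (n+1+1) (by omega)]
        simp
      have h2 : ∑ t ∈ range (n + 1 + 1),
            (-1:ℤ) ^ (t + i) * (t.choose i : ℤ) * (t.factorial : ℤ) * (stirling (n+1) t : ℤ)
          = ∑ t ∈ range (n + 1),
            (-1:ℤ) ^ (t + 1 + i) * ((t+1).choose i : ℤ) * (((t+1).factorial : ℤ)) * (stirling (n+1) (t+1) : ℤ) := by
        rw [sum_range_succ']
        rw [stirling_succ_zero]
        simp
      rw [hsplit, h1, h2, ← sum_add_distrib]
      cases i with
      | zero =>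
          have hz : ∀ t ∈ range (n+1),
              (-1:ℤ) ^ (t + 0) * (t.choose 0 : ℤ) * (((t+1).factorial : ℤ)) * (stirling (n+1) (t+1) : ℤ)
              + (-1:ℤ) ^ (t + 1 + 0) * ((t+1).choose 0 : ℤ) * (((t+1).factorial : ℤ)) * (stirling (n+1) (t+1) : ℤ)
              = 0 := by
            intro t _
            simp only [Nat.choose_zero_right, Nat.cast_one]
            rw [show t + 1 + 0 = (t + 0) + 1 by omega, pow_succ]
            ring
          rw [sum_congr rfl hz]
          simp [stirling_succ_zero]
      | succ j =>
          have hterm : ∀ t ∈ range (n+1),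
              (-1:ℤ) ^ (t + (j+1)) * (t.choose (j+1) : ℤ) * (((t+1).factorial : ℤ)) * (stirling (n+1) (t+1) : ℤ)
              + (-1:ℤ) ^ (t + 1 + (j+1)) * ((t+1).choose (j+1) : ℤ) * (((t+1).factorial : ℤ)) * (stirling (n+1) (t+1) : ℤ)
              = ((j:ℤ)+1) * ((-1:ℤ) ^ (t + j) * (t.choose j : ℤ) * (t.factorial : ℤ) * (stirling (n+1) (t+1) : ℤ))
                + (-((j:ℤ)+1)) * ((-1:ℤ) ^ (t + (j+1)) * (t.choose (j+1) : ℤ) * (t.factorial : ℤ) * (stirling (n+1) (t+1) : ℤ)) := by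
            intro t _
            have hpascal : ((t+1).choose (j+1) : ℤ) = (t.choose j : ℤ) + (t.choose (j+1) : ℤ) := by
              exact_mod_cast Nat.choose_succ_succ t j
            have hsm : ((t:ℤ) + 1) * (t.choose j : ℤ)
                = ((t.choose j : ℤ) + (t.choose (j+1) : ℤ)) * ((j:ℤ) + 1) := by
              have : ((t:ℤ) + 1) * (t.choose j : ℤ) = ((t+1).choose (j+1) : ℤ) * ((j:ℤ) + 1) := by
                exact_mod_cast Nat.add_one_mul_choose_eq t j
              rw [hpascal] at this
              exact this
            have hfac : (((t+1).factorial : ℤ)) = ((t:ℤ)+1) * (t.factorial : ℤ) := by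
              push_cast [Nat.factorial_succ]; ring
            rw [hfac, hpascal]
            linear_combination ((-1:ℤ)^(t+j) * (t.factorial : ℤ) * (stirling (n+1) (t+1) : ℤ)) * hsm
          rw [sum_congr rfl hterm, sum_add_distrib, ← mul_sum, ← mul_sum, ih j, ih (j+1)]
          rw [stirling_succ_succ n j]
          push_cast [Nat.factorial_succ]
          ring
      
theorem stmt8 (m : ℕ) (hm : 2 ≤ m) :
    (∑ t ∈ Finset.range (m + 1),
        ((Nat.factorial t : ℤ) * (stirling (m + 1) (t + 1) : ℤ)) ^ 2)
      = (-1) ^ m * ∑ i ∈ Finset.range (m + 1),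
          (-1) ^ i * (Nat.factorial i : ℤ) * ((i : ℤ) + 1) ^ m * (stirling m i : ℤ) := by
  have hinv' : ∀ t ∈ range (m + 1),
      (Nat.factorial t : ℤ) * (stirling (m + 1) (t + 1) : ℤ)
        = ∑ i ∈ range (m + 1), (-1) ^ (t + i) * (t.choose i : ℤ) * ((i : ℤ) + 1) ^ m := by
    intro t ht
    rw [stirling_inv m t]
    refine sum_subset (range_subset_range.mpr (by have := mem_range.mp ht; omega)) ?_
    intro i hi hni
    have : t < i := by
      simp only [mem_range, not_lt] at hni
      omega
    rw [Nat.choose_eq_zero_of_lt this]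
    simp
  have step1 : (∑ t ∈ range (m + 1),
        ((Nat.factorial t : ℤ) * (stirling (m + 1) (t + 1) : ℤ)) ^ 2)
      = ∑ t ∈ range (m + 1), ∑ i ∈ range (m + 1),
          ((Nat.factorial t : ℤ) * (stirling (m + 1) (t + 1) : ℤ))
            * ((-1) ^ (t + i) * (t.choose i : ℤ) * ((i : ℤ) + 1) ^ m) := by
    refine sum_congr rfl fun t ht => ?_
    rw [sq]
    nth_rewrite 2 [hinv' t ht]
    rw [mul_sum]
  rw [step1, sum_comm]
  have step2 : ∀ i ∈ range (m + 1),
      ∑ t ∈ range (m + 1),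
          ((Nat.factorial t : ℤ) * (stirling (m + 1) (t + 1) : ℤ))
            * ((-1) ^ (t + i) * (t.choose i : ℤ) * ((i : ℤ) + 1) ^ m)
        = ((i : ℤ) + 1) ^ m * ((-1) ^ (m + i) * (Nat.factorial i : ℤ) * (stirling m i : ℤ)) := by
    intro i _
    rw [← key m i, mul_sum]
    refine sum_congr rfl fun t _ => by ring
  rw [sum_congr rfl step2, mul_sum]
  refine sum_congr rfl fun i _ => ?_
  rw [pow_add]
  ring
end
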